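/- arXiv:2509.24141 — 4 statements merged into one kernel-verified Lean document; each statement's English description precedes it below -/
import Mathlib

section
/- Fix an integer g ≥ 2 and set L = cos(π/(g+1)). For c > 0 let s(c) = 2·arsinh(L / sinh(c/2)). Then there exists a unique c₁ > 0 such that cosh(c₁) = 2·L² + cosh(s(c₁)); equivalently, the equation ℓ_β(c,c) = ℓ_γ(c,c) has a unique positive solution c = c₁. -/
/-- Inverse hyperbolic cosine (for `x ≥ 1`). -/
noncomputable def arcosh (x : ℝ) : ℝ := Real.log (x + Real.sqrt (x ^ 2 - 1))

/-- The seam length `s(c) = 2·arsinh(L / sinh(c/2))`, so that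
`sinh(c/2)·sinh(s(c)/2) = L`. -/
noncomputable def seam (L c : ℝ) : ℝ := 2 * Real.arsinh (L / Real.sinh (c / 2))

/-!
Write `u = sinh²(c/2)`. Then `cosh c = 1 + 2u` and, since `cosh (2 arsinh x) = 1 + 2x²`,
`cosh (s c) = 1 + 2L²/u`; so the equation reads `u² = L²(u + 1)`. For `L ≠ 0` this quadratic has
exactly one positive root, and `c ↦ sinh²(c/2)` is a bijection of `(0, ∞)` onto itself.
-/

open Real

lemma cos_pi_div_pos {n : ℝ} (hn : 2 < n) : 0 < cos (π / n) := by
  have hn0 : 0 < n := by linarith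
  apply cos_pos_of_mem_Ioo
  constructor
  · linarith [div_pos pi_pos hn0, pi_pos]
  · exact div_lt_div_of_pos_left pi_pos two_pos hn

lemma cosh_eq_one_add_two_mul_sinh_half_sq (x : ℝ) : cosh x = 1 + 2 * sinh (x / 2) ^ 2 := by
  have h := cosh_two_mul (x / 2)
  rw [mul_div_cancel₀ x two_ne_zero, cosh_sq] at h
  linear_combination h

lemma cosh_two_mul_arsinh (x : ℝ) : cosh (2 * arsinh x) = 1 + 2 * x ^ 2 := by
  rw [cosh_two_mul, cosh_sq, sinh_arsinh]
  ring

lemma cosh_seam (L c : ℝ) : cosh (seam L c) = 1 + 2 * (L / sinh (c / 2)) ^ 2 :=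
  cosh_two_mul_arsinh _

lemma cosh_eq_two_mul_sq_add_cosh_seam_iff {L c : ℝ} (hc : c ≠ 0) :
    cosh c = 2 * L ^ 2 + cosh (seam L c) ↔
      (sinh (c / 2) ^ 2) ^ 2 = L ^ 2 * (sinh (c / 2) ^ 2 + 1) := by
  have hs : sinh (c / 2) ≠ 0 := by simpa using hc
  rw [cosh_seam, cosh_eq_one_add_two_mul_sinh_half_sq c]
  constructor <;> intro h
  · field_simp at h; linear_combination h / 2
  · field_simp; linear_combination 2 * h

lemma existsUnique_pos_sq_eq_mul_add_one {a : ℝ} (ha : 0 < a) :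
    ∃! u : ℝ, 0 < u ∧ u ^ 2 = a * (u + 1) := by
  have hd : 0 ≤ a ^ 2 + 4 * a := by positivity
  set w := (a + √(a ^ 2 + 4 * a)) / 2
  have hw_root : w ^ 2 = a * (w + 1) := by linear_combination (1/4 : ℝ) * sq_sqrt hd
  have hw : 0 < w := by positivity
  refine ⟨w, ⟨hw, hw_root⟩, fun v ⟨hv, hv_root⟩ => ?_⟩
  have hav : a < v := by nlinarith
  have hfactor : (v - w) * (v + w - a) = 0 := by linear_combination hv_root - hw_root
  rcases mul_eq_zero.1 hfactor with h | h <;> linarith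

lemma sinh_half_sq_eq_iff {c u : ℝ} (hc : 0 ≤ c) (hu : 0 ≤ u) :
    sinh (c / 2) ^ 2 = u ↔ c = 2 * arsinh √u := by
  constructor
  · rintro rfl
    rw [sqrt_sq (sinh_nonneg_iff.mpr (by linarith)), arsinh_sinh]
    ring
  · rintro rfl
    rw [mul_div_cancel_left₀ _ two_ne_zero, sinh_arsinh, sq_sqrt hu]

/-- Fix an integer `g ≥ 2` and set `L = cos(π/(g+1))`. For `c > 0` let
`s(c) = 2·arsinh(L / sinh(c/2))`. Then there exists a unique `c₁ > 0` such that
`cosh(c₁) = 2·L² + cosh(s(c₁))`; equivalently, the equation `ℓ_β(c,c) = ℓ_γ(c,c)`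
has a unique positive solution `c = c₁`. -/
theorem exists_unique_c1 (g : ℕ) (hg : 2 ≤ g) (L : ℝ)
    (hL : L = Real.cos (Real.pi / (g + 1))) :
    ∃! c₁ : ℝ, 0 < c₁ ∧ Real.cosh c₁ = 2 * L ^ 2 + Real.cosh (seam L c₁) := by
  have hL0 : 0 < L := hL ▸ cos_pi_div_pos (by norm_cast; omega)
  obtain ⟨u, ⟨hu, hu_root⟩, hu_unique⟩ := existsUnique_pos_sq_eq_mul_add_one (pow_pos hL0 2)
  have hc₁ : 0 < 2 * arsinh √u := mul_pos two_pos (arsinh_pos_iff.mpr (sqrt_pos.mpr hu))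
  refine ⟨2 * arsinh √u, ⟨hc₁, ?_⟩, fun c ⟨hc, hc_eq⟩ => ?_⟩
  · rwa [cosh_eq_two_mul_sq_add_cosh_seam_iff hc₁.ne', (sinh_half_sq_eq_iff hc₁.le hu.le).2 rfl]
  · rw [cosh_eq_two_mul_sq_add_cosh_seam_iff hc.ne'] at hc_eq
    exact (sinh_half_sq_eq_iff hc.le hu.le).1 (hu_unique _ ⟨by positivity, hc_eq⟩)
end

section
/- Fix an integer g ≥ 2, set L = cos(π/(g+1)), and for c > 0 let s(c) = 2·arsinh(L/sinh(c/2)). Then for every c > 0 one has ℓ_β(c,0) > ℓ_γ(c,0) = 2c and ℓ_β(c,0) > ℓ_α(c,0); that is, at twist parameter t = 0 the curve β is strictly longer than both γ and α. -/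
/-- The length `ℓ_α(c,t) = 4·arcosh(cosh(s(c)/2)·cosh(t/2))`. -/
noncomputable def ellAlpha (L c t : ℝ) : ℝ :=
  4 * arcosh (Real.cosh (seam L c / 2) * Real.cosh (t / 2))

/-- The length
`ℓ_β(c,t) = 2·arcosh(cosh(s(c))·cosh(t/2)·cosh(c−t/2) − sinh(t/2)·sinh(c−t/2))`. -/
noncomputable def ellBeta (L c t : ℝ) : ℝ :=
  2 * arcosh (Real.cosh (seam L c) * Real.cosh (t / 2) * Real.cosh (c - t / 2)
      - Real.sinh (t / 2) * Real.sinh (c - t / 2))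

open Real hiding arcosh

lemma arcosh_eq_real_arcosh : arcosh = Real.arcosh := rfl

lemma lt_arcosh_of_cosh_lt {x y : ℝ} (hx : 0 ≤ x) (h : cosh x < y) : x < Real.arcosh y := by
  have := (Real.arcosh_lt_arcosh (cosh_pos x) ((cosh_pos x).trans h)).2 h
  rwa [Real.arcosh_cosh hx] at this

lemma cos_pi_div_succ_pos {g : ℕ} (hg : 2 ≤ g) : 0 < cos (π / (g + 1)) := by
  have hg' : (3 : ℝ) ≤ g + 1 := by norm_cast; omega
  have hpos : 0 < π / (g + 1) := by positivity
  apply cos_pos_of_mem_Ioo ⟨by linarith [pi_pos], ?_⟩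
  rw [div_lt_div_iff₀ (by positivity) two_pos]
  nlinarith [pi_pos]

lemma seam_pos {L c : ℝ} (hL : 0 < L) (hc : 0 < c) : 0 < seam L c :=
  mul_pos two_pos (arsinh_pos_iff.2 (div_pos hL (sinh_pos_iff.2 (half_pos hc))))

lemma ellBeta_zero (L c : ℝ) :
    ellBeta L c 0 = 2 * Real.arcosh (cosh (seam L c) * cosh c) := by
  simp [ellBeta, arcosh_eq_real_arcosh]

lemma ellAlpha_zero {L c : ℝ} (hs : 0 ≤ seam L c) : ellAlpha L c 0 = 2 * seam L c := by
  rw [ellAlpha, arcosh_eq_real_arcosh, zero_div, cosh_zero, mul_one,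
    Real.arcosh_cosh (by positivity)]
  ring

/-- Fix an integer `g ≥ 2`, set `L = cos(π/(g+1))`, and for `c > 0` let
`s(c) = 2·arsinh(L/sinh(c/2))`. Then for every `c > 0` one has
`ℓ_β(c,0) > ℓ_γ(c,0) = 2c` and `ℓ_β(c,0) > ℓ_α(c,0)`; that is, at twist parameter
`t = 0` the curve `β` is strictly longer than both `γ` and `α`. -/
theorem beta_longest_at_t_zero (g : ℕ) (hg : 2 ≤ g) (L : ℝ)
    (hL : L = Real.cos (Real.pi / (g + 1))) :
    ∀ c : ℝ, 0 < c → ellBeta L c 0 > 2 * c ∧ ellBeta L c 0 > ellAlpha L c 0 := by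
  intro c hc
  have hs : 0 < seam L c := seam_pos (hL ▸ cos_pi_div_succ_pos hg) hc
  have hcosh_s : 1 < cosh (seam L c) := one_lt_cosh.2 hs.ne'
  have hcosh_c : 1 < cosh c := one_lt_cosh.2 hc.ne'
  have hγ : c < Real.arcosh (cosh (seam L c) * cosh c) :=
    lt_arcosh_of_cosh_lt hc.le (lt_mul_of_one_lt_left (cosh_pos c) hcosh_s)
  have hα : seam L c < Real.arcosh (cosh (seam L c) * cosh c) :=
    lt_arcosh_of_cosh_lt hs.le (lt_mul_of_one_lt_right (cosh_pos _) hcosh_c)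
  rw [ellBeta_zero, ellAlpha_zero hs.le]
  constructor <;> linarith
end

section
/- Let L > 0 and c > 0 be real, and let s > 0 satisfy sinh(c/2)·sinh(s/2) = √L. Set C = cosh(c/2). Then the equation cosh(c) = cosh(s)·cosh(c/4)·cosh(3c/4) − sinh(c/4)·sinh(3c/4) holds if and only if L = (C−1)²·(2C+1)/(2C−1). -/
/-! Writing `cosh s = 1 + 2 sinh²(s/2)` and expanding the products of `cosh`, `sinh` at `c/4`, `3c/4`
into `cosh c = 2C² - 1` and `cosh (c/2) = C`, the equation becomes linear in `P = sinh²(s/2)`: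
`P (2C - 1)(C + 1) = (2C + 1)(C - 1)`. The seam relation gives `L = P (C² - 1)`, so multiplying by
`C - 1`, which is nonzero because `c > 0`, turns this into the stated formula for `L`. -/

open Real

theorem cosh_mul_cosh_mul_cosh_sub_sinh_mul_sinh (s x y : ℝ) :
    cosh s * cosh x * cosh y - sinh x * sinh y
      = cosh (x - y) + sinh (s / 2) ^ 2 * (cosh (x + y) + cosh (x - y)) := by
  have hs : cosh s = 1 + 2 * sinh (s / 2) ^ 2 := by
    conv_lhs => rw [← add_halves s, ← two_mul]
    rw [cosh_two_mul, cosh_sq']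
    ring
  rw [hs, cosh_add, cosh_sub]
  ring

theorem cosh_eq_half_twist_iff (c s : ℝ) :
    cosh c = cosh s * cosh (c / 4) * cosh (3 * c / 4) - sinh (c / 4) * sinh (3 * c / 4) ↔
      sinh (s / 2) ^ 2 * ((2 * cosh (c / 2) - 1) * (cosh (c / 2) + 1))
        = (2 * cosh (c / 2) + 1) * (cosh (c / 2) - 1) := by
  have hc : cosh c = 2 * cosh (c / 2) ^ 2 - 1 := by
    conv_lhs => rw [← add_halves c, ← two_mul]
    rw [cosh_two_mul, sinh_sq]
    ring
  rw [cosh_mul_cosh_mul_cosh_sub_sinh_mul_sinh, show c / 4 - 3 * c / 4 = -(c / 2) by ring,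
    show c / 4 + 3 * c / 4 = c by ring, cosh_neg, hc]
  constructor <;> intro h <;> linear_combination -h

theorem mul_sq_sub_one_eq_div_iff {C P L : ℝ} (hC : 1 < C) (hL : L = P * (C ^ 2 - 1)) :
    P * ((2 * C - 1) * (C + 1)) = (2 * C + 1) * (C - 1) ↔
      L = (C - 1) ^ 2 * (2 * C + 1) / (2 * C - 1) := by
  have hC₁ : C - 1 ≠ 0 := by linarith
  rw [hL, eq_div_iff (by linarith)]
  constructor
  · intro h
    linear_combination (C - 1) * h
  · intro h
    apply mul_left_cancel₀ hC₁
    linear_combination h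

theorem half_twist_equation_reduction_general (L c s : ℝ) (hL : 0 < L) (hc : 0 < c)
    (hseam : Real.sinh (c / 2) * Real.sinh (s / 2) = Real.sqrt L)
    (C : ℝ) (hC : C = Real.cosh (c / 2)) :
    (Real.cosh c
        = Real.cosh s * Real.cosh (c / 4) * Real.cosh (3 * c / 4)
          - Real.sinh (c / 4) * Real.sinh (3 * c / 4))
      ↔ L = (C - 1) ^ 2 * (2 * C + 1) / (2 * C - 1) := by
  have hC₁ : 1 < C := hC ▸ one_lt_cosh.mpr (by positivity)
  have hLP : L = sinh (s / 2) ^ 2 * (C ^ 2 - 1) := by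
    rw [hC, ← sinh_sq, ← sq_sqrt hL.le, ← hseam]
    ring
  rw [cosh_eq_half_twist_iff, ← hC]
  exact mul_sq_sub_one_eq_div_iff hC₁ hLP

/-- Let `L > 0` and `c > 0` be real, and let `s > 0` satisfy
`sinh(c/2)·sinh(s/2) = √L`. Set `C = cosh(c/2)`. Then the equation
`cosh(c) = cosh(s)·cosh(c/4)·cosh(3c/4) − sinh(c/4)·sinh(3c/4)` holds if and only if
`L = (C−1)²·(2C+1)/(2C−1)`. -/
theorem half_twist_equation_reduction (L c s : ℝ) (hL : 0 < L) (hc : 0 < c) (hs : 0 < s)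
    (hseam : Real.sinh (c / 2) * Real.sinh (s / 2) = Real.sqrt L)
    (C : ℝ) (hC : C = Real.cosh (c / 2)) :
    (Real.cosh c
        = Real.cosh s * Real.cosh (c / 4) * Real.cosh (3 * c / 4)
          - Real.sinh (c / 4) * Real.sinh (3 * c / 4))
      ↔ L = (C - 1) ^ 2 * (2 * C + 1) / (2 * C - 1) :=
  half_twist_equation_reduction_general L c s hL hc hseam C hC
end

section
/- Let L > 0 be real and let c, s, c_α, s_α be positive reals and t, t_α nonnegative reals satisfying the four relations sinh(c/2)·sinh(s/2) = L, cosh(c_α/2) = cosh(s/2)·cosh(t/2), sinh(c_α/2)·sinh(s_α/2) = L, and cosh(c/2) = cosh(s_α/2)·cosh(t_α/2). Then t = 0 if and only if t_α = 0. -/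
open Real

/-!
If `t = 0`, the relation `cosh (c_α/2) = cosh (s/2) cosh (t/2)` forces `c_α = s`. Eliminating `L`
between the two seam–cuff relations then gives `sinh (s_α/2) = sinh (c/2)`, so `s_α = c`, and the
remaining relation becomes `cosh (c/2) = cosh (c/2) cosh (t_α/2)`, i.e. `t_α = 0`. The four relations
are symmetric under `(c, s, t) ↔ (c_α, s_α, t_α)`, which gives the converse.
-/

theorem Real.eq_zero_of_cosh_eq_one {x : ℝ} (h : cosh x = 1) : x = 0 := by
  by_contra hx
  exact (one_lt_cosh.2 hx).ne' h

theorem twist_eq_zero_of_twist_eq_zero {c s cα sα t tα : ℝ} (hs : 0 < s) (hcα : 0 < cα)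
    (hsinh : sinh (c / 2) * sinh (s / 2) = sinh (cα / 2) * sinh (sα / 2))
    (h2 : cosh (cα / 2) = cosh (s / 2) * cosh (t / 2))
    (h4 : cosh (c / 2) = cosh (sα / 2) * cosh (tα / 2)) (ht : t = 0) :
    tα = 0 := by
  subst ht
  rw [zero_div, cosh_zero, mul_one] at h2
  obtain rfl : cα = s := by
    have := cosh_injOn (by simp only [Set.mem_Ici]; positivity)
      (by simp only [Set.mem_Ici]; positivity) h2
    linarith
  obtain rfl : sα = c := by
    have hsinh_ne : sinh (cα / 2) ≠ 0 := (sinh_pos_iff.2 (by positivity)).ne'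
    have : sinh (sα / 2) = sinh (c / 2) := mul_left_cancel₀ hsinh_ne (by rw [← hsinh, mul_comm])
    linarith [sinh_injective this]
  have hcosh : cosh (tα / 2) = 1 := (mul_eq_left₀ (cosh_pos _).ne').1 h4.symm
  linarith [eq_zero_of_cosh_eq_one hcosh]

theorem twist_zero_iff_general (L c s cα sα t tα : ℝ)
    (hc : 0 < c) (hs : 0 < s) (hcα : 0 < cα) (hsα : 0 < sα)
    (h1 : Real.sinh (c / 2) * Real.sinh (s / 2) = L)
    (h2 : Real.cosh (cα / 2) = Real.cosh (s / 2) * Real.cosh (t / 2))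
    (h3 : Real.sinh (cα / 2) * Real.sinh (sα / 2) = L)
    (h4 : Real.cosh (c / 2) = Real.cosh (sα / 2) * Real.cosh (tα / 2)) :
    t = 0 ↔ tα = 0 :=
  ⟨twist_eq_zero_of_twist_eq_zero hs hcα (h1.trans h3.symm) h2 h4,
    twist_eq_zero_of_twist_eq_zero hsα hc (h3.trans h1.symm) h4 h2⟩

/-- Let `L > 0` be real and let `c, s, c_α, s_α` be positive reals and
`t, t_α` nonnegative reals satisfying the four relations
`sinh(c/2)·sinh(s/2) = L`, `cosh(c_α/2) = cosh(s/2)·cosh(t/2)`,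
`sinh(c_α/2)·sinh(s_α/2) = L`, and `cosh(c/2) = cosh(s_α/2)·cosh(t_α/2)`.
Then `t = 0` if and only if `t_α = 0`. -/
theorem twist_zero_iff (L c s cα sα t tα : ℝ) (hL : 0 < L)
    (hc : 0 < c) (hs : 0 < s) (hcα : 0 < cα) (hsα : 0 < sα)
    (ht : 0 ≤ t) (htα : 0 ≤ tα)
    (h1 : Real.sinh (c / 2) * Real.sinh (s / 2) = L)
    (h2 : Real.cosh (cα / 2) = Real.cosh (s / 2) * Real.cosh (t / 2))
    (h3 : Real.sinh (cα / 2) * Real.sinh (sα / 2) = L)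
    (h4 : Real.cosh (c / 2) = Real.cosh (sα / 2) * Real.cosh (tα / 2)) :
    t = 0 ↔ tα = 0 :=
  twist_zero_iff_general L c s cα sα t tα hc hs hcα hsα h1 h2 h3 h4
end
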